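/- (Quadratic bounds for the Lyapunov function near the identity.) Let n ≥ 1. There exist constants ε₁ > 0, c₁ > 0, c₂ > 0 such that for every n×n complex unitary matrix X̃ with ‖X̃ − I‖ < ε₁ (Frobenius norm), one has det(I + X̃) ≠ 0 and c₁‖X̃ − I‖² ≤ V(X̃) ≤ c₂‖X̃ − I‖², where V(X̃) = −Tr((X̃ − I)²(X̃ + I)^{−2}). -/

import Mathlib

/-!
For a unitary `X` with `X + 1` invertible, the Cayley transform `C = (X - 1)(X + 1)⁻¹` is
skew-Hermitian, and `X - 1` commutes with `(X + 1)⁻¹`; hence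
`V(X) = -Tr(C²) = Tr(Cᴴ C) = ‖C‖²`.
Near the identity `X + 1` is close to `2`, so it is invertible and both `‖X + 1‖` and
`‖(X + 1)⁻¹‖` are bounded in terms of `n` alone. The identities `C = (X - 1)(X + 1)⁻¹` and
`X - 1 = C (X + 1)` then make `‖C‖` and `‖X - 1‖` comparable.
-/

open Matrix

/-- The Frobenius norm of a complex matrix. -/
noncomputable def frobNorm {n : ℕ} (A : Matrix (Fin n) (Fin n) ℂ) : ℝ :=
  Real.sqrt (∑ i, ∑ j, ‖A i j‖ ^ 2)

/-- The Lyapunov function `V(X̃) = -Tr ((X̃ - I)² (X̃ + I)⁻²)` (its value is real for unitary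
`X̃` with no eigenvalue `-1`; we take the real part). -/
noncomputable def lyapV {n : ℕ} (X : Matrix (Fin n) (Fin n) ℂ) : ℝ :=
  (-(((X - 1) * (X - 1)) * ((X + 1)⁻¹ * (X + 1)⁻¹)).trace).re

section NormedAlgebra

variable {R : Type*} [NormedRing R] [NormedAlgebra ℝ R]

lemma isUnit_one_add_of_norm_sub_one_lt_two [CompleteSpace R] {x : R} (hx : ‖x - 1‖ < 2) :
    IsUnit (1 + x) := by
  have hsmall : ‖(2⁻¹ : ℝ) • (1 - x)‖ < 1 := by
    rw [norm_smul, norm_sub_rev]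
    norm_num
    linarith
  have hscaled : (1 : R) + x = (2 : ℝ) • (1 - (2⁻¹ : ℝ) • (1 - x)) := by
    module
  rw [hscaled, Algebra.smul_def]
  exact ((isUnit_of_invertible _).map (algebraMap ℝ R)).mul
    (isUnit_one_sub_of_norm_lt_one hsmall)

lemma two_sub_norm_sub_one_mul_norm_le {x b : R} (hb : b * (1 + x) = 1) :
    (2 - ‖x - 1‖) * ‖b‖ ≤ ‖(1 : R)‖ := by
  have htwo : (2 : ℝ) • b = 1 - b * (x - 1) := by
    rw [mul_sub, mul_one, ← hb, mul_add, mul_one]; module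
  have : 2 * ‖b‖ ≤ ‖(1 : R)‖ + ‖b‖ * ‖x - 1‖ := by
    calc 2 * ‖b‖ = ‖(2 : ℝ) • b‖ := by rw [norm_smul]; norm_num
      _ = ‖1 - b * (x - 1)‖ := by rw [htwo]
      _ ≤ ‖(1 : R)‖ + ‖b‖ * ‖x - 1‖ :=
        (norm_sub_le _ _).trans (by gcongr; exact norm_mul_le _ _)
  linarith

end NormedAlgebra

section Frobenius

attribute [local instance] Matrix.frobeniusNormedAddCommGroup Matrix.frobeniusNormedRing
  Matrix.frobeniusNormedAlgebra

lemma frobNorm_eq_norm {n : ℕ} (A : Matrix (Fin n) (Fin n) ℂ) : frobNorm A = ‖A‖ := by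
  rw [frobNorm, frobenius_norm_def, Real.sqrt_eq_rpow]
  norm_num [Real.rpow_two]

lemma re_trace_conjTranspose_mul_self {𝕜 m n : Type*} [RCLike 𝕜] [Fintype m] [Fintype n]
    (A : Matrix m n 𝕜) : RCLike.re (Aᴴ * A).trace = ‖A‖ ^ 2 := by
  rw [frobenius_norm_def, ← Real.rpow_natCast, ← Real.rpow_mul (by positivity), Finset.sum_comm]
  simp [Matrix.trace, Matrix.mul_apply, RCLike.conj_mul]

variable {𝕜 m : Type*} [RCLike 𝕜] [Fintype m] [DecidableEq m]

lemma frobenius_norm_one : ‖(1 : Matrix m m 𝕜)‖ = √(Fintype.card m) := by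
  simpa [Real.coe_sqrt] using congr_arg NNReal.toReal (frobenius_nnnorm_one (n := m) (α := 𝕜))

noncomputable def cayley (X : Matrix m m 𝕜) : Matrix m m 𝕜 := (X - 1) * (X + 1)⁻¹

lemma commute_sub_one_nonsing_inv_add_one (X : Matrix m m 𝕜) : Commute (X - 1) (X + 1)⁻¹ := by
  have hX : Commute (X - 1) (X + 1) := by
    show (X - 1) * (X + 1) = (X + 1) * (X - 1)
    noncomm_ring
  rcases nonsing_inv_cancel_or_zero (X + 1) with ⟨hl, hr⟩ | h0
  · exact hX.units_inv_right (u := ⟨X + 1, (X + 1)⁻¹, hr, hl⟩)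
  · rw [h0]
    exact Commute.zero_right _

lemma lyapV_eq_neg_re_trace_cayley_mul_self {n : ℕ} (X : Matrix (Fin n) (Fin n) ℂ) :
    lyapV X = -((cayley X * cayley X).trace.re) := by
  rw [lyapV, cayley, (commute_sub_one_nonsing_inv_add_one X).symm.mul_mul_mul_comm,
    Complex.neg_re]

lemma conjTranspose_cayley {X : Matrix m m 𝕜} (hX : X ∈ unitaryGroup m 𝕜)
    (h : IsUnit (X + 1).det) : (cayley X)ᴴ = -cayley X := by
  set B := (X + 1)⁻¹
  have hr : (X + 1) * B = 1 := mul_nonsing_inv _ h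
  have hr' : Bᴴ * (X + 1)ᴴ = 1 := by rw [← conjTranspose_mul, hr, conjTranspose_one]
  have hunit : Xᴴ * X = 1 := hX.1
  have hsum : (X - 1)ᴴ * (X + 1) + (X + 1)ᴴ * (X - 1) = 0 := by
    simp only [conjTranspose_sub, conjTranspose_add, conjTranspose_one]
    have : (Xᴴ - 1) * (X + 1) + (Xᴴ + 1) * (X - 1) = 2 * (Xᴴ * X - 1) := by noncomm_ring
    rw [this, hunit, sub_self, mul_zero]
  rw [eq_neg_iff_add_eq_zero]
  calc (cayley X)ᴴ + cayley X
      = Bᴴ * (X - 1)ᴴ * ((X + 1) * B) + Bᴴ * (X + 1)ᴴ * ((X - 1) * B) := by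
        rw [hr, hr', cayley, conjTranspose_mul, mul_one, one_mul]
    _ = Bᴴ * ((X - 1)ᴴ * (X + 1) + (X + 1)ᴴ * (X - 1)) * B := by noncomm_ring
    _ = 0 := by rw [hsum, mul_zero, zero_mul]

lemma lyapV_eq_norm_cayley_sq {n : ℕ} {X : Matrix (Fin n) (Fin n) ℂ}
    (hX : X ∈ unitaryGroup (Fin n) ℂ) (h : IsUnit (X + 1).det) :
    lyapV X = ‖cayley X‖ ^ 2 := by
  rw [lyapV_eq_neg_re_trace_cayley_mul_self, ← re_trace_conjTranspose_mul_self,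
    conjTranspose_cayley hX h, neg_mul, trace_neg]
  rfl

lemma isUnit_det_add_one_of_norm_sub_one_lt_two {X : Matrix m m 𝕜} (h : ‖X - 1‖ < 2) :
    IsUnit (X + 1).det := by
  rw [← isUnit_iff_isUnit_det, add_comm]
  exact isUnit_one_add_of_norm_sub_one_lt_two h

lemma norm_cayley_le {X : Matrix m m 𝕜} (h : ‖X - 1‖ ≤ 1) :
    ‖cayley X‖ ≤ √(Fintype.card m) * ‖X - 1‖ := by
  have hdet := isUnit_det_add_one_of_norm_sub_one_lt_two (X := X) (by linarith)
  have hinv : ‖(X + 1)⁻¹‖ ≤ √(Fintype.card m) := by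
    have := two_sub_norm_sub_one_mul_norm_le (x := X) (b := (X + 1)⁻¹)
      (by rw [add_comm 1 X]; exact nonsing_inv_mul _ hdet)
    rw [frobenius_norm_one] at this
    nlinarith [norm_nonneg (X + 1)⁻¹]
  calc ‖cayley X‖ ≤ ‖X - 1‖ * ‖(X + 1)⁻¹‖ := norm_mul_le _ _
    _ ≤ ‖X - 1‖ * √(Fintype.card m) := by gcongr
    _ = √(Fintype.card m) * ‖X - 1‖ := mul_comm _ _

lemma norm_sub_one_le_mul_norm_cayley {X : Matrix m m 𝕜} (h : ‖X - 1‖ ≤ 1) :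
    ‖X - 1‖ ≤ (1 + 2 * √(Fintype.card m)) * ‖cayley X‖ := by
  have hdet := isUnit_det_add_one_of_norm_sub_one_lt_two (X := X) (by linarith)
  have hX : cayley X * (X + 1) = X - 1 := nonsing_inv_mul_cancel_right _ _ hdet
  have hnorm : ‖X + 1‖ ≤ 1 + 2 * √(Fintype.card m) :=
    calc ‖X + 1‖ = ‖(X - 1) + (2 : ℝ) • (1 : Matrix m m 𝕜)‖ := by congr 1; module
      _ ≤ ‖X - 1‖ + 2 * √(Fintype.card m) := by
        refine (norm_add_le _ _).trans_eq ?_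
        rw [norm_smul, frobenius_norm_one, Real.norm_two]
      _ ≤ 1 + 2 * √(Fintype.card m) := by gcongr
  calc ‖X - 1‖ = ‖cayley X * (X + 1)‖ := by rw [hX]
    _ ≤ ‖cayley X‖ * ‖X + 1‖ := norm_mul_le _ _
    _ ≤ ‖cayley X‖ * (1 + 2 * √(Fintype.card m)) := by gcongr
    _ = (1 + 2 * √(Fintype.card m)) * ‖cayley X‖ := mul_comm _ _

theorem lyapunov_quadratic_bounds_general (n : ℕ) :
    ∃ (ε₁ c₁ c₂ : ℝ), 0 < ε₁ ∧ 0 < c₁ ∧ 0 < c₂ ∧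
      ∀ X : Matrix (Fin n) (Fin n) ℂ,
        X ∈ Matrix.unitaryGroup (Fin n) ℂ →
        frobNorm (X - 1) < ε₁ →
        (1 + X).det ≠ 0 ∧
        c₁ * frobNorm (X - 1) ^ 2 ≤ lyapV X ∧
        lyapV X ≤ c₂ * frobNorm (X - 1) ^ 2 := by
  refine ⟨1, (1 + 2 * √n)⁻¹ ^ 2, n + 1, one_pos, by positivity, by positivity, ?_⟩
  intro X hX hXε
  rw [frobNorm_eq_norm] at hXε ⊢
  have hdet := isUnit_det_add_one_of_norm_sub_one_lt_two (X := X) (by linarith)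
  have hupper := norm_cayley_le hXε.le
  have hlower := norm_sub_one_le_mul_norm_cayley hXε.le
  rw [Fintype.card_fin] at hupper hlower
  rw [add_comm 1 X, lyapV_eq_norm_cayley_sq hX hdet]
  refine ⟨hdet.ne_zero, ?_, ?_⟩
  · rw [← mul_pow]
    gcongr
    rwa [inv_mul_le_iff₀ (by positivity)]
  · calc ‖cayley X‖ ^ 2 ≤ (√n * ‖X - 1‖) ^ 2 := by gcongr
      _ = n * ‖X - 1‖ ^ 2 := by rw [mul_pow, Real.sq_sqrt (Nat.cast_nonneg n)]
      _ ≤ (n + 1) * ‖X - 1‖ ^ 2 := by gcongr; linarith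

/-- Quadratic bounds for the Lyapunov function near the identity.
There are `ε₁, c₁, c₂ > 0` such that every unitary `X̃` with `‖X̃ - I‖ < ε₁` satisfies
`det (I + X̃) ≠ 0` and `c₁ ‖X̃ - I‖² ≤ V(X̃) ≤ c₂ ‖X̃ - I‖²`. -/
theorem lyapunov_quadratic_bounds (n : ℕ) (hn : 1 ≤ n) :
    ∃ (ε₁ c₁ c₂ : ℝ), 0 < ε₁ ∧ 0 < c₁ ∧ 0 < c₂ ∧
      ∀ X : Matrix (Fin n) (Fin n) ℂ,
        X ∈ Matrix.unitaryGroup (Fin n) ℂ →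
        frobNorm (X - 1) < ε₁ →
        (1 + X).det ≠ 0 ∧
        c₁ * frobNorm (X - 1) ^ 2 ≤ lyapV X ∧
        lyapV X ≤ c₂ * frobNorm (X - 1) ^ 2 :=
  lyapunov_quadratic_bounds_general n

end Frobenius
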